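/- Let G be a finite simple connected triangle-free graph of minimum degree at least 3 with a star-cover {S_1, …, S_m} in which every star has size at least 6. Let T be a tree in G of maximal size (number of edges) subject to: (1) T contains no two adjacent vertices of degree 2 in T; (2) the vertex set of G − V(T) is the union of the vertex sets of the stars S_i for i in some subset I of {1, …, m}; and (3) whenever a leaf v of T is joined in G to a vertex of G − V(T), the neighbour of v in T has degree at least 5 in T. Then every vertex of T has at most one neighbour in G lying outside V(T). -/

import Mathlib

open SimpleGraph

/-- The degree of a vertex `v` in a simple graph `H`. -/
noncomputable def gdeg {V : Type} (H : SimpleGraph V) (v : V) : ℕ :=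
  Nat.card (H.neighborSet v)

/-- The degree of a vertex `v` in a subgraph `H` of `G`. -/
noncomputable def subdeg {V : Type} {G : SimpleGraph V} (H : G.Subgraph) (v : V) : ℕ :=
  Nat.card (H.neighborSet v)

/-- A subgraph is a star if it is a tree with at most one vertex of degree greater than 1. -/
def IsStar {V : Type} {G : SimpleGraph V} (H : G.Subgraph) : Prop :=
  H.coe.IsTree ∧ {v ∈ H.verts | 1 < subdeg H v}.Subsingleton

/-!
Suppose `a ∈ T` has two neighbours `u₁ ≠ u₂` outside `T`; they lie in stars `S i`, `S j` of
the complement. In each case we glue onto `T`, at the single vertex `a`, a tree `B` made of edges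
and stars of the complement. Gluing two trees at one vertex gives a tree, the vertices of `T`
other than `a` keep their degrees, and every new vertex of degree `2`, and every new leaf that
still sees the outside, hangs on a vertex of degree at least `3` or on a star centre of degree
at least `5`. So `T ⊔ B` satisfies (1)–(3) and has more edges than `T`. The cases:
* `deg_T a ≥ 2` or `u₁` is a centre: hang `S i` from `a` by the edge `a u₁`;
* `u₁`, `u₂` leaves of different stars: hang both;
* `u₁`, `u₂` leaves of the same star, `u₂` adjacent to `z` in another star `S k`: hang `S i`
  from `a` by `a u₂`, and `S k` from `u₂` by `u₂ z`;
* otherwise: hang `S i` minus `u₂` from `a` by `a u₁`, and add the edge `a u₂`; the new leaf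
  `u₂` has no neighbour outside the new tree.
-/

lemma Set.compl_union_biUnion {α κ : Type*} {A : Set α} {s : κ → Set α} {I J : Set κ}
    (hs : Pairwise fun i j => Disjoint (s i) (s j)) (hA : Aᶜ = ⋃ i ∈ I, s i) :
    (A ∪ ⋃ j ∈ J, s j)ᶜ = ⋃ i ∈ I \ J, s i := by
  ext x
  simp only [Set.compl_union, Set.mem_inter_iff, hA, Set.mem_compl_iff, Set.mem_iUnion,
    Set.mem_sdiff, exists_prop, not_exists, not_and]
  constructor
  · rintro ⟨⟨i, hi, hxi⟩, hxJ⟩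
    exact ⟨i, ⟨hi, fun hiJ => hxJ i hiJ hxi⟩, hxi⟩
  · rintro ⟨i, ⟨hi, hiJ⟩, hxi⟩
    refine ⟨⟨i, hi, hxi⟩, fun j hj hxj => ?_⟩
    obtain rfl : j = i := by_contra fun hji => Set.disjoint_left.mp (hs hji) hxj hxi
    exact hiJ hj

section Degree

variable {V : Type} {G : SimpleGraph V}

lemma subdeg_eq_ncard (H : G.Subgraph) (v : V) : subdeg H v = (H.neighborSet v).ncard :=
  Nat.card_coe_set_eq _

lemma subdeg_eq_zero_of_notMem {H : G.Subgraph} {v : V} (hv : v ∉ H.verts) : subdeg H v = 0 := by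
  have : H.neighborSet v = ∅ := Set.eq_empty_of_forall_notMem fun _ hw => hv (H.edge_vert hw)
  rw [subdeg_eq_ncard, this, Set.ncard_empty]

lemma mem_verts_of_one_le_subdeg {H : G.Subgraph} {v : V} (h : 1 ≤ subdeg H v) :
    v ∈ H.verts := by
  by_contra hv
  rw [subdeg_eq_zero_of_notMem hv] at h
  omega

variable [Finite V]

lemma ncard_le_subdeg {H : G.Subgraph} {v : V} {s : Set V} (hs : s ⊆ H.neighborSet v) :
    s.ncard ≤ subdeg H v := by
  rw [subdeg_eq_ncard]
  exact Set.ncard_le_ncard hs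

lemma one_le_subdeg_of_adj {H : G.Subgraph} {v w : V} (h : H.Adj v w) : 1 ≤ subdeg H v := by
  simpa using ncard_le_subdeg (s := {w}) (by simpa using h)

lemma two_le_subdeg_of_adj {H : G.Subgraph} {v w₁ w₂ : V} (h₁ : H.Adj v w₁)
    (h₂ : H.Adj v w₂) (hw : w₁ ≠ w₂) : 2 ≤ subdeg H v := by
  have := ncard_le_subdeg (s := {w₁, w₂}) (H := H) (v := v)
    (by rintro z (rfl | rfl) <;> assumption)
  rwa [Set.ncard_pair hw] at this

lemma three_le_subdeg_of_adj {H : G.Subgraph} {v w₁ w₂ w₃ : V} (h₁ : H.Adj v w₁)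
    (h₂ : H.Adj v w₂) (h₃ : H.Adj v w₃) (h₁₂ : w₁ ≠ w₂) (h₁₃ : w₁ ≠ w₃)
    (h₂₃ : w₂ ≠ w₃) : 3 ≤ subdeg H v := by
  have := ncard_le_subdeg (s := {w₁, w₂, w₃}) (H := H) (v := v)
    (by rintro z (rfl | rfl | rfl) <;> assumption)
  rwa [Set.ncard_eq_three.mpr ⟨w₁, w₂, w₃, h₁₂, h₁₃, h₂₃, rfl⟩] at this

lemma subdeg_mono {H K : G.Subgraph} (h : H ≤ K) (v : V) : subdeg H v ≤ subdeg K v := by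
  rw [subdeg_eq_ncard]
  exact ncard_le_subdeg (Subgraph.neighborSet_subset_of_subgraph h v)

lemma subdeg_sup {H K : G.Subgraph} (h : (H.verts ∩ K.verts).Subsingleton) (v : V) :
    subdeg (H ⊔ K) v = subdeg H v + subdeg K v := by
  have hdisj : Disjoint (H.neighborSet v) (K.neighborSet v) :=
    Set.disjoint_left.mpr fun w hH hK => (H.adj_sub hH).ne
      (h ⟨H.edge_vert hH, K.edge_vert hK⟩ ⟨H.edge_vert hH.symm, K.edge_vert hK.symm⟩)
  rw [subdeg_eq_ncard, subdeg_eq_ncard, subdeg_eq_ncard, Subgraph.neighborSet_sup,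
    Set.ncard_union_eq hdisj]

end Degree

namespace SimpleGraph.Subgraph

variable {V : Type} {G : SimpleGraph V}

lemma verts_subgraphOfAdj_sup {x u : V} (hxu : G.Adj x u) {S : G.Subgraph} (hu : u ∈ S.verts) :
    (G.subgraphOfAdj hxu ⊔ S).verts = insert x S.verts := by
  rw [verts_sup, subgraphOfAdj_verts, Set.insert_union, Set.singleton_union,
    Set.insert_eq_of_mem hu]

variable [Finite V]

lemma edgeSet_ncard_sup {H K : G.Subgraph} (h : (H.verts ∩ K.verts).Subsingleton) :
    (H ⊔ K).edgeSet.ncard = H.edgeSet.ncard + K.edgeSet.ncard := by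
  refine edgeSet_sup ▸ Set.ncard_union_eq (Set.disjoint_left.mpr fun e hH hK => ?_)
  induction e using Sym2.ind with
  | _ x y =>
    exact (H.adj_sub hH).ne
      (h ⟨H.edge_vert hH, K.edge_vert hK⟩ ⟨H.edge_vert hH.symm, K.edge_vert hK.symm⟩)

lemma edgeSet_ncard_lt_sup {T B : G.Subgraph} {a b : V} (hBT : B.verts ∩ T.verts = {a})
    (hab : B.Adj a b) : T.edgeSet.ncard < (T ⊔ B).edgeSet.ncard := by
  have hB : 0 < B.edgeSet.ncard := (Set.ncard_pos (Set.toFinite _)).mpr ⟨s(a, b), hab⟩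
  rw [edgeSet_ncard_sup (Set.inter_comm _ _ ▸ hBT ▸ Set.subsingleton_singleton)]
  omega

lemma isTree_coe_iff (H : G.Subgraph) :
    H.coe.IsTree ↔ H.Connected ∧ H.edgeSet.ncard + 1 = H.verts.ncard := by
  rw [isTree_iff_connected_and_card, ← Subgraph.connected_iff', Nat.card_coe_set_eq,
    Nat.card_coe_set_eq, ← image_coe_edgeSet_coe,
    Set.ncard_image_of_injective _ (Sym2.map.injective Subtype.val_injective)]

lemma isTree_sup {H K : G.Subgraph} (hH : H.coe.IsTree) (hK : K.coe.IsTree) {a : V}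
    (h : H.verts ∩ K.verts = {a}) : (H ⊔ K).coe.IsTree := by
  rw [isTree_coe_iff] at *
  refine ⟨connected_sup hH.1.preconnected hK.1.preconnected ⟨a, by simp [h]⟩, ?_⟩
  have := Set.ncard_union_add_ncard_inter H.verts K.verts
  rw [h, Set.ncard_singleton] at this
  rw [edgeSet_ncard_sup (h ▸ Set.subsingleton_singleton), verts_sup]
  omega

lemma isTree_subgraphOfAdj {x y : V} (h : G.Adj x y) : (G.subgraphOfAdj h).coe.IsTree := by
  rw [isTree_coe_iff, edgeSet_subgraphOfAdj, subgraphOfAdj_verts, Set.ncard_singleton,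
    Set.ncard_pair h.ne]
  exact ⟨subgraphOfAdj_connected h, rfl⟩

lemma isTree_subgraphOfAdj_sup {x u : V} (hxu : G.Adj x u) {S : G.Subgraph}
    (hS : S.coe.IsTree) (hx : x ∉ S.verts) (hu : u ∈ S.verts) :
    (G.subgraphOfAdj hxu ⊔ S).coe.IsTree :=
  isTree_sup (isTree_subgraphOfAdj hxu) hS (by
    rw [subgraphOfAdj_verts, Set.insert_inter_of_notMem hx, Set.singleton_inter_of_mem hu])

lemma Connected.exists_two_le_subdeg_of_not_adj {H : G.Subgraph} (hH : H.Connected)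
    {x y : V} (hx : x ∈ H.verts) (hy : y ∈ H.verts) (hxy : x ≠ y) (hnadj : ¬H.Adj x y) :
    ∃ z ∈ H.verts, z ≠ y ∧ 2 ≤ subdeg H z := by
  classical
  obtain ⟨p, hp⟩ := (hH ⟨x, hx⟩ ⟨y, hy⟩).some.toPath
  obtain ⟨z, hxz, q, rfl⟩ := Walk.exists_eq_cons_of_ne (by simpa using hxy) p
  have hzy : z ≠ ⟨y, hy⟩ := by rintro rfl; exact hnadj hxz
  obtain ⟨w, hzw, r, rfl⟩ := Walk.exists_eq_cons_of_ne hzy q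
  simp only [Walk.cons_isPath_iff, Walk.support_cons, List.mem_cons, not_or] at hp
  refine ⟨z, z.2, fun h => hp.1.2 ?_, two_le_subdeg_of_adj hxz.symm hzw fun h => hp.2.2 ?_⟩
  · rw [show z = ⟨y, hy⟩ from Subtype.ext h]
    exact r.end_mem_support
  · rw [show (⟨x, hx⟩ : H.verts) = w from Subtype.ext h]
    exact r.start_mem_support

end SimpleGraph.Subgraph

open Subgraph

section Star

variable {V : Type} {G : SimpleGraph V}

structure IsStarAt (S : G.Subgraph) (c : V) : Prop where
  center_mem : c ∈ S.verts
  adj_center : ∀ v ∈ S.verts, v ≠ c → S.Adj c v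
  eq_or_eq_center : ∀ ⦃x y : V⦄, S.Adj x y → x = c ∨ y = c

namespace IsStarAt

variable {S : G.Subgraph} {c : V}

lemma neighborSet_center (hS : IsStarAt S c) : S.neighborSet c = S.verts \ {c} := by
  ext v
  exact ⟨fun h => ⟨S.edge_vert h.symm, (S.adj_sub h).ne.symm⟩,
    fun h => hS.adj_center v h.1 h.2⟩

lemma connected (hS : IsStarAt S c) : S.Connected := by
  have hreach : ∀ v : S.verts, S.coe.Reachable v ⟨c, hS.center_mem⟩ := fun ⟨v, hv⟩ => by
    rcases eq_or_ne v c with rfl | hvc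
    · rfl
    · exact Adj.reachable (hS.adj_center v hv hvc).symm
  exact Subgraph.connected_iff'.mpr <| (connected_iff_exists_forall_reachable _).mpr
    ⟨⟨c, hS.center_mem⟩, fun v => (hreach v).symm⟩

lemma deleteVerts {u : V} (hS : IsStarAt S c) (hu : u ≠ c) : IsStarAt (S.deleteVerts {u}) c where
  center_mem := ⟨hS.center_mem, hu.symm⟩
  adj_center v hv hvc := by
    simp only [deleteVerts_adj, Set.mem_singleton_iff] at hv ⊢
    exact ⟨hS.center_mem, hu.symm, hv.1, hv.2, hS.adj_center v hv.1 hvc⟩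
  eq_or_eq_center x y h := hS.eq_or_eq_center (deleteVerts_adj.mp h).2.2.2.2

lemma edgeSet_ncard (hS : IsStarAt S c) : S.edgeSet.ncard = subdeg S c := by
  have hedges : S.edgeSet = (fun v => s(c, v)) '' S.neighborSet c := by
    ext e
    induction e using Sym2.ind with
    | _ x y =>
      refine ⟨fun h => ?_, ?_⟩
      · rcases hS.eq_or_eq_center h with rfl | rfl
        · exact ⟨y, h, rfl⟩
        · exact ⟨x, h.symm, Sym2.eq_swap⟩
      · rintro ⟨v, hv, hvxy⟩
        exact hvxy ▸ hv
  rw [hedges, Set.ncard_image_of_injective _ fun _ _ h => Sym2.congr_right.mp h, subdeg_eq_ncard]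

lemma exists_adj {v : V} (hS : IsStarAt S c) (hv : v ∈ S.verts)
    (hc : 1 ≤ subdeg S c) : ∃ w, S.Adj v w := by
  rcases eq_or_ne v c with rfl | hvc
  · obtain ⟨w, hw⟩ := Set.nonempty_of_ncard_ne_zero (s := S.neighborSet v)
      (by rw [← subdeg_eq_ncard]; omega)
    exact ⟨w, hw⟩
  · exact ⟨c, (hS.adj_center v hv hvc).symm⟩

variable [Finite V]

lemma subdeg_center_add_one (hS : IsStarAt S c) : subdeg S c + 1 = S.verts.ncard := by
  rw [subdeg_eq_ncard, hS.neighborSet_center, Set.ncard_sdiff_singleton_add_one hS.center_mem]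

lemma isTree (hS : IsStarAt S c) : S.coe.IsTree :=
  (isTree_coe_iff S).mpr ⟨hS.connected, hS.edgeSet_ncard ▸ hS.subdeg_center_add_one⟩

lemma five_le_subdeg_of_leaf_adj {B : G.Subgraph} {x u : V} (hS : IsStarAt S c)
    (hc : 5 ≤ subdeg S c) (hxu : G.Adj x u) (hx : x ∉ S.verts) (hu : u ∈ S.verts)
    (hB : G.subgraphOfAdj hxu ⊔ S ≤ B) {v w : V} (hvw : (G.subgraphOfAdj hxu ⊔ S).Adj v w)
    (hvx : v ≠ x) (hv : subdeg B v = 1) : 5 ≤ subdeg B w := by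
  have hSB := subdeg_mono (le_sup_right.trans hB)
  rcases hvw with hvw | hvw
  · obtain ⟨rfl, rfl⟩ : v = u ∧ w = x := by
      rw [subgraphOfAdj_adj, Sym2.eq_iff] at hvw
      tauto
    obtain ⟨z, hz⟩ := hS.exists_adj hu (by omega)
    have := two_le_subdeg_of_adj (H := B) (hB.2 (Or.inl (subgraphOfAdj_adj_self hxu).symm))
      (hB.2 (Or.inr hz)) fun h => hx (h.symm ▸ S.edge_vert hz.symm)
    omega
  · rcases hS.eq_or_eq_center hvw with rfl | rfl
    · have := hSB v
      omega
    · exact hc.trans (hSB w)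

end IsStarAt

lemma IsStar.exists_isStarAt [Finite V] {S : G.Subgraph} (hS : IsStar S)
    (hsize : 2 ≤ S.edgeSet.ncard) : ∃ c, IsStarAt S c := by
  obtain ⟨hconn, hcard⟩ := (isTree_coe_iff S).mp hS.1
  obtain ⟨c, hc, hcdeg⟩ : ∃ c ∈ S.verts, 1 < subdeg S c := by
    obtain ⟨x, y, z, hx, hy, hz, hxy, hxz, hyz⟩ :=
      (Set.two_lt_ncard_iff (s := S.verts)).mp (by omega)
    by_cases hxy' : S.Adj x y
    · by_cases hxz' : S.Adj x z
      · exact ⟨x, hx, two_le_subdeg_of_adj hxy' hxz' hyz⟩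
      obtain ⟨w, hw, -, hw2⟩ := hconn.exists_two_le_subdeg_of_not_adj hx hz hxz hxz'
      exact ⟨w, hw, hw2⟩
    obtain ⟨w, hw, -, hw2⟩ := hconn.exists_two_le_subdeg_of_not_adj hx hy hxy hxy'
    exact ⟨w, hw, hw2⟩
  have hunique : ∀ v ∈ S.verts, 1 < subdeg S v → v = c := fun v hv hv2 =>
    hS.2 ⟨hv, hv2⟩ ⟨hc, hcdeg⟩
  have hadj : ∀ v ∈ S.verts, v ≠ c → S.Adj c v := fun v hv hvc => by
    by_contra hnadj
    obtain ⟨w, hw, hwc, hw2⟩ :=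
      hconn.exists_two_le_subdeg_of_not_adj hv hc hvc fun h => hnadj h.symm
    exact hwc (hunique w hw hw2)
  refine ⟨c, hc, hadj, fun x y hxy => ?_⟩
  by_contra! hne
  exact hne.1 (hunique x (S.edge_vert hxy)
    (two_le_subdeg_of_adj hxy (hadj x (S.edge_vert hxy) hne.1).symm hne.2))

end Star

section Candidate

variable {V : Type} {G : SimpleGraph V} {ι : Type*}

/-- The trees allowed in the statement: conditions (1)–(3). -/
structure IsCandidate (S : ι → G.Subgraph) (T : G.Subgraph) : Prop where
  isTree : T.coe.IsTree
  not_deg_two_of_adj : ∀ a b : V, T.Adj a b → ¬(subdeg T a = 2 ∧ subdeg T b = 2)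
  compl_eq_iUnion : ∃ I : Set ι, T.vertsᶜ = ⋃ i ∈ I, (S i).verts
  five_le_subdeg_of_exposed_leaf : ∀ a : V, subdeg T a = 1 →
    (∃ u, u ∉ T.verts ∧ G.Adj a u) → ∀ w, T.Adj a w → 5 ≤ subdeg T w

variable {S : ι → G.Subgraph} {T B : G.Subgraph} {a b : V}

lemma disjoint_verts_of_mem {I : Set ι} (hI : T.vertsᶜ = ⋃ i ∈ I, (S i).verts) {i : ι}
    (hi : i ∈ I) : Disjoint (S i).verts T.verts :=
  Set.disjoint_left.mpr fun _ hv => by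
    rw [← Set.mem_compl_iff, hI]
    exact Set.mem_biUnion hi hv

lemma exists_mem_star_of_notMem {I : Set ι} (hI : T.vertsᶜ = ⋃ i ∈ I, (S i).verts) {u : V}
    (hu : u ∉ T.verts) : ∃ i ∈ I, u ∈ (S i).verts := by
  rw [← Set.mem_compl_iff, hI] at hu
  simpa using hu

variable [Finite V]

lemma one_le_subdeg_of_mem_star {I : Set ι} (hT : T.Connected)
    (hI : T.vertsᶜ = ⋃ i ∈ I, (S i).verts)
    (hdisj : Pairwise fun i j => Disjoint (S i).verts (S j).verts) (ha : a ∈ T.verts) {k : ι}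
    (hak : a ∈ (S k).verts) (hbk : b ∈ (S k).verts) (hab : a ≠ b) : 1 ≤ subdeg T a := by
  have hbT : b ∈ T.verts := by
    by_contra hbT
    obtain ⟨j, hj, hbj⟩ := exists_mem_star_of_notMem hI hbT
    obtain rfl : j = k := by_contra fun hjk => (hdisj hjk).notMem_of_mem_left hbj hbk
    exact (disjoint_verts_of_mem hI hj).notMem_of_mem_left hak ha
  have : Nontrivial T.verts := Set.Nontrivial.coe_sort ⟨a, ha, b, hbT, hab⟩
  obtain ⟨z, hz⟩ := hT.preconnected.exists_adj_of_nontrivial ⟨a, ha⟩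
  exact one_le_subdeg_of_adj hz

theorem IsCandidate.sup (hT : IsCandidate S T) (ha : 1 ≤ subdeg T a) (hB : B.coe.IsTree)
    (hBT : B.verts ∩ T.verts = {a}) (hab : B.Adj a b)
    (hcompl : ∃ I : Set ι, (T ⊔ B).vertsᶜ = ⋃ i ∈ I, (S i).verts)
    (hB1 : ∀ x y, B.Adj x y → 3 ≤ subdeg T x + subdeg B x ∨ 3 ≤ subdeg T y + subdeg B y)
    (hB3 : ∀ v w, B.Adj v w → v ≠ a → subdeg B v = 1 →
      (∃ u, u ∉ T.verts ∧ u ∉ B.verts ∧ G.Adj v u) → 5 ≤ subdeg B w) :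
    IsCandidate S (T ⊔ B) := by
  have hTB : T.verts ∩ B.verts = {a} := Set.inter_comm _ _ ▸ hBT
  have hdeg := subdeg_sup (hTB ▸ Set.subsingleton_singleton) (H := T) (K := B)
  have hcommon : ∀ v ∈ T.verts, v ∈ B.verts → v = a := fun v hvT hvB =>
    (hTB ▸ ⟨hvT, hvB⟩ : v ∈ ({a} : Set V))
  have hBa := one_le_subdeg_of_adj hab
  have hbT : b ∉ T.verts := fun hbT =>
    (B.adj_sub hab).ne (hcommon b hbT (B.edge_vert hab.symm)).symm
  -- `a` has degree `2` in `T ⊔ B` only if it is a leaf of `T` exposed to `b`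
  have hend : ∀ x y, T.Adj x y → x ∈ B.verts → subdeg (T ⊔ B) x = 2 →
      5 ≤ subdeg (T ⊔ B) y := by
    intro x y hxy hxB hx2
    obtain rfl := hcommon x (T.edge_vert hxy) hxB
    have h5 := hT.five_le_subdeg_of_exposed_leaf x (by have := hdeg x; omega)
      ⟨b, hbT, B.adj_sub hab⟩ y hxy
    have := hdeg y
    omega
  refine ⟨isTree_sup hT.isTree hB hTB, fun x y hxy hxy2 => ?_, hcompl,
    fun v hv1 hvu w hvw => ?_⟩
  · rcases hxy with hxy | hxy
    · by_cases hxB : x ∈ B.verts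
      · have := hend x y hxy hxB hxy2.1; omega
      by_cases hyB : y ∈ B.verts
      · have := hend y x hxy.symm hyB hxy2.2; omega
      refine hT.not_deg_two_of_adj x y hxy ?_
      rwa [hdeg, hdeg, subdeg_eq_zero_of_notMem hxB, subdeg_eq_zero_of_notMem hyB] at hxy2
    · have := hB1 x y hxy
      rw [hdeg, hdeg] at hxy2
      omega
  · have hva : v ≠ a := by rintro rfl; have := hdeg v; omega
    obtain ⟨u, huTB, hvu⟩ := hvu
    have hw := hdeg w
    rcases hvw with hvw | hvw
    · have hvB : v ∉ B.verts := fun hvB => hva (hcommon v (T.edge_vert hvw) hvB)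
      have h5 := hT.five_le_subdeg_of_exposed_leaf v
        (by rwa [hdeg, subdeg_eq_zero_of_notMem hvB] at hv1)
        ⟨u, fun hu => huTB (Or.inl hu), hvu⟩ w hvw
      omega
    · have hvT : v ∉ T.verts := fun hvT => hva (hcommon v hvT (B.edge_vert hvw))
      have h5 := hB3 v w hvw hva (by rw [hdeg, subdeg_eq_zero_of_notMem hvT] at hv1; omega)
        ⟨u, fun hu => huTB (Or.inl hu), fun hu => huTB (Or.inr hu), hvu⟩
      omega

theorem IsCandidate.exists_larger_of_sup {I J : Set ι} (hT : IsCandidate S T)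
    (hI : T.vertsᶜ = ⋃ i ∈ I, (S i).verts)
    (hdisj : Pairwise fun i j => Disjoint (S i).verts (S j).verts) (hJ : J ⊆ I)
    (ha : 1 ≤ subdeg T a) (hB : B.coe.IsTree)
    (hBverts : B.verts = insert a (⋃ j ∈ J, (S j).verts)) (hab : B.Adj a b)
    (hB1 : ∀ x y, B.Adj x y → 3 ≤ subdeg T x + subdeg B x ∨ 3 ≤ subdeg T y + subdeg B y)
    (hB3 : ∀ v w, B.Adj v w → v ≠ a → subdeg B v = 1 →
      (∃ u, u ∉ T.verts ∧ u ∉ B.verts ∧ G.Adj v u) → 5 ≤ subdeg B w) :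
    ∃ T', IsCandidate S T' ∧ T.edgeSet.ncard < T'.edgeSet.ncard := by
  have haT := mem_verts_of_one_le_subdeg ha
  have hJT : Disjoint (⋃ j ∈ J, (S j).verts) T.verts :=
    Set.disjoint_iUnion₂_left.mpr fun j hj => disjoint_verts_of_mem hI (hJ hj)
  have hBT : B.verts ∩ T.verts = {a} := by
    rw [hBverts, Set.insert_inter_of_mem haT, hJT.inter_eq, insert_empty_eq]
  refine ⟨T ⊔ B, hT.sup ha hB hBT hab ⟨I \ J, ?_⟩ hB1 hB3, edgeSet_ncard_lt_sup hBT hab⟩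
  rw [← Set.compl_union_biUnion hdisj hI, verts_sup, hBverts, Set.union_insert,
    Set.insert_eq_of_mem (Set.mem_union_left _ haT)]

theorem IsCandidate.exists_larger_of_adj_star {I : Set ι} (hT : IsCandidate S T)
    (hI : T.vertsᶜ = ⋃ i ∈ I, (S i).verts)
    (hdisj : Pairwise fun i j => Disjoint (S i).verts (S j).verts) {i : ι} (hi : i ∈ I) {c u : V}
    (hS : IsStarAt (S i) c) (hc : 5 ≤ subdeg (S i) c) (ha : 1 ≤ subdeg T a) (hau : G.Adj a u)
    (hu : u ∈ (S i).verts) (h : 2 ≤ subdeg T a ∨ u = c) :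
    ∃ T', IsCandidate S T' ∧ T.edgeSet.ncard < T'.edgeSet.ncard := by
  have haS : a ∉ (S i).verts :=
    (disjoint_verts_of_mem hI hi).notMem_of_mem_right (mem_verts_of_one_le_subdeg ha)
  have hab : (G.subgraphOfAdj hau ⊔ S i).Adj a u := Or.inl (subgraphOfAdj_adj_self hau)
  have hcB : 5 ≤ subdeg (G.subgraphOfAdj hau ⊔ S i) c := hc.trans (subdeg_mono le_sup_right c)
  refine hT.exists_larger_of_sup hI hdisj (Set.singleton_subset_iff.mpr hi) ha
    (isTree_subgraphOfAdj_sup hau hS.isTree haS hu)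
    (by rw [Set.biUnion_singleton, verts_subgraphOfAdj_sup hau hu]) hab ?_
    fun v w hvw hva hv _ => hS.five_le_subdeg_of_leaf_adj hc hau haS hu le_rfl hvw hva hv
  have hau3 : 3 ≤ subdeg T a + subdeg (G.subgraphOfAdj hau ⊔ S i) a ∨
      3 ≤ subdeg T u + subdeg (G.subgraphOfAdj hau ⊔ S i) u := by
    refine h.imp (fun h2 => ?_) fun huc => ?_
    · have := one_le_subdeg_of_adj hab
      omega
    · subst huc
      omega
  rintro x y (hxy | hxy)
  · obtain ⟨rfl, rfl⟩ | ⟨rfl, rfl⟩ := Sym2.eq_iff.mp hxy <;> omega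
  · obtain rfl | rfl := hS.eq_or_eq_center hxy <;> omega

theorem IsCandidate.exists_larger_of_adj_two_stars {I : Set ι} (hT : IsCandidate S T)
    (hI : T.vertsᶜ = ⋃ i ∈ I, (S i).verts)
    (hdisj : Pairwise fun i j => Disjoint (S i).verts (S j).verts) {i j : ι} (hi : i ∈ I)
    (hj : j ∈ I) (hij : i ≠ j) {c₁ c₂ u₁ u₂ : V} (hS₁ : IsStarAt (S i) c₁)
    (hc₁ : 5 ≤ subdeg (S i) c₁) (hS₂ : IsStarAt (S j) c₂)
    (hc₂ : 5 ≤ subdeg (S j) c₂) (ha : 1 ≤ subdeg T a) (hau₁ : G.Adj a u₁)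
    (hau₂ : G.Adj a u₂) (hu₁ : u₁ ∈ (S i).verts) (hu₂ : u₂ ∈ (S j).verts) :
    ∃ T', IsCandidate S T' ∧ T.edgeSet.ncard < T'.edgeSet.ncard := by
  have haT := mem_verts_of_one_le_subdeg ha
  have haS₁ : a ∉ (S i).verts := (disjoint_verts_of_mem hI hi).notMem_of_mem_right haT
  have haS₂ : a ∉ (S j).verts := (disjoint_verts_of_mem hI hj).notMem_of_mem_right haT
  set P₁ := G.subgraphOfAdj hau₁ ⊔ S i
  set P₂ := G.subgraphOfAdj hau₂ ⊔ S j
  have hB : (P₁ ⊔ P₂).coe.IsTree := by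
    refine isTree_sup (isTree_subgraphOfAdj_sup hau₁ hS₁.isTree haS₁ hu₁)
      (isTree_subgraphOfAdj_sup hau₂ hS₂.isTree haS₂ hu₂) (a := a) ?_
    rw [verts_subgraphOfAdj_sup hau₁ hu₁, verts_subgraphOfAdj_sup hau₂ hu₂,
      ← Set.insert_inter_distrib, (hdisj hij).inter_eq, insert_empty_eq]
  have hab : (P₁ ⊔ P₂).Adj a u₁ := Or.inl (Or.inl (subgraphOfAdj_adj_self hau₁))
  have hadeg : 2 ≤ subdeg (P₁ ⊔ P₂) a :=
    two_le_subdeg_of_adj hab (Or.inr (Or.inl (subgraphOfAdj_adj_self hau₂)))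
      fun h => (hdisj hij).notMem_of_mem_left hu₁ (h ▸ hu₂)
  have hc₁B : 5 ≤ subdeg (P₁ ⊔ P₂) c₁ :=
    hc₁.trans (subdeg_mono (le_sup_right.trans le_sup_left) c₁)
  have hc₂B : 5 ≤ subdeg (P₁ ⊔ P₂) c₂ :=
    hc₂.trans (subdeg_mono (le_sup_right.trans le_sup_right) c₂)
  refine hT.exists_larger_of_sup hI hdisj (Set.pair_subset hi hj) ha hB ?_ hab ?_ ?_
  · rw [Set.biUnion_pair, verts_sup, verts_subgraphOfAdj_sup hau₁ hu₁,
      verts_subgraphOfAdj_sup hau₂ hu₂, Set.insert_union_distrib]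
  · rintro x y ((hxy | hxy) | (hxy | hxy))
    · obtain ⟨rfl, rfl⟩ | ⟨rfl, rfl⟩ := Sym2.eq_iff.mp hxy <;> omega
    · obtain rfl | rfl := hS₁.eq_or_eq_center hxy <;> omega
    · obtain ⟨rfl, rfl⟩ | ⟨rfl, rfl⟩ := Sym2.eq_iff.mp hxy <;> omega
    · obtain rfl | rfl := hS₂.eq_or_eq_center hxy <;> omega
  · rintro v w (hvw | hvw) hva hv -
    · exact hS₁.five_le_subdeg_of_leaf_adj hc₁ hau₁ haS₁ hu₁ le_sup_left hvw hva hv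
    · exact hS₂.five_le_subdeg_of_leaf_adj hc₂ hau₂ haS₂ hu₂ le_sup_right hvw hva hv

theorem IsCandidate.exists_larger_of_adj_star_adj_star {I : Set ι} (hT : IsCandidate S T)
    (hI : T.vertsᶜ = ⋃ i ∈ I, (S i).verts)
    (hdisj : Pairwise fun i j => Disjoint (S i).verts (S j).verts) {i j : ι} (hi : i ∈ I)
    (hj : j ∈ I) (hij : i ≠ j) {c₁ c₂ x y : V} (hS₁ : IsStarAt (S i) c₁)
    (hc₁ : 5 ≤ subdeg (S i) c₁) (hS₂ : IsStarAt (S j) c₂)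
    (hc₂ : 5 ≤ subdeg (S j) c₂) (ha : 1 ≤ subdeg T a) (hax : G.Adj a x) (hxy : G.Adj x y)
    (hx : x ∈ (S i).verts) (hxc : x ≠ c₁) (hy : y ∈ (S j).verts) :
    ∃ T', IsCandidate S T' ∧ T.edgeSet.ncard < T'.edgeSet.ncard := by
  have haT := mem_verts_of_one_le_subdeg ha
  have haS₁ : a ∉ (S i).verts := (disjoint_verts_of_mem hI hi).notMem_of_mem_right haT
  have haS₂ : a ∉ (S j).verts := (disjoint_verts_of_mem hI hj).notMem_of_mem_right haT
  have hxS₂ : x ∉ (S j).verts := (hdisj hij).notMem_of_mem_left hx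
  set P₁ := G.subgraphOfAdj hax ⊔ S i
  set P₂ := G.subgraphOfAdj hxy ⊔ S j
  have hB : (P₁ ⊔ P₂).coe.IsTree := by
    refine isTree_sup (isTree_subgraphOfAdj_sup hax hS₁.isTree haS₁ hx)
      (isTree_subgraphOfAdj_sup hxy hS₂.isTree hxS₂ hy) (a := x) ?_
    rw [verts_subgraphOfAdj_sup hax hx, verts_subgraphOfAdj_sup hxy hy,
      Set.insert_inter_of_notMem (by rintro (h | h); exacts [hax.ne h, haS₂ h]),
      Set.inter_insert_of_mem hx, (hdisj hij).inter_eq, insert_empty_eq]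
  have hab : (P₁ ⊔ P₂).Adj a x := Or.inl (Or.inl (subgraphOfAdj_adj_self hax))
  have hxdeg : 3 ≤ subdeg (P₁ ⊔ P₂) x :=
    three_le_subdeg_of_adj hab.symm (Or.inl (Or.inr (hS₁.adj_center x hx hxc).symm))
      (Or.inr (Or.inl (subgraphOfAdj_adj_self hxy)))
      (fun h => haS₁ (h ▸ hS₁.center_mem)) (fun h => haS₂ (h ▸ hy))
      (fun h => (hdisj hij).notMem_of_mem_left hS₁.center_mem (h ▸ hy))
  have hc₁B : 5 ≤ subdeg (P₁ ⊔ P₂) c₁ :=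
    hc₁.trans (subdeg_mono (le_sup_right.trans le_sup_left) c₁)
  have hc₂B : 5 ≤ subdeg (P₁ ⊔ P₂) c₂ :=
    hc₂.trans (subdeg_mono (le_sup_right.trans le_sup_right) c₂)
  refine hT.exists_larger_of_sup hI hdisj (Set.pair_subset hi hj) ha hB ?_ hab ?_ ?_
  · rw [Set.biUnion_pair, verts_sup, verts_subgraphOfAdj_sup hax hx,
      verts_subgraphOfAdj_sup hxy hy,
      Set.insert_union, Set.union_insert, Set.insert_eq_of_mem (Set.mem_union_left _ hx)]
  · rintro p q ((hpq | hpq) | (hpq | hpq))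
    · obtain ⟨rfl, rfl⟩ | ⟨rfl, rfl⟩ := Sym2.eq_iff.mp hpq <;> omega
    · obtain rfl | rfl := hS₁.eq_or_eq_center hpq <;> omega
    · obtain ⟨rfl, rfl⟩ | ⟨rfl, rfl⟩ := Sym2.eq_iff.mp hpq <;> omega
    · obtain rfl | rfl := hS₂.eq_or_eq_center hpq <;> omega
  · rintro v w (hvw | hvw) hva hv -
    · exact hS₁.five_le_subdeg_of_leaf_adj hc₁ hax haS₁ hx le_sup_left hvw hva hv
    · refine hS₂.five_le_subdeg_of_leaf_adj hc₂ hxy hxS₂ hy le_sup_right hvw ?_ hv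
      rintro rfl
      omega

theorem IsCandidate.exists_larger_of_adj_two_leaves {I : Set ι} (hT : IsCandidate S T)
    (hI : T.vertsᶜ = ⋃ i ∈ I, (S i).verts)
    (hdisj : Pairwise fun i j => Disjoint (S i).verts (S j).verts) {i : ι} (hi : i ∈ I)
    {c u₁ u₂ : V} (hS : IsStarAt (S i) c) (hc : 6 ≤ subdeg (S i) c) (ha : 1 ≤ subdeg T a)
    (hau₁ : G.Adj a u₁) (hau₂ : G.Adj a u₂) (hu₁ : u₁ ∈ (S i).verts)
    (hu₂ : u₂ ∈ (S i).verts) (hu₁₂ : u₁ ≠ u₂) (hu₂c : u₂ ≠ c)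
    (hnb : ∀ z, G.Adj u₂ z → z ∈ T.verts ∨ z ∈ (S i).verts) :
    ∃ T', IsCandidate S T' ∧ T.edgeSet.ncard < T'.edgeSet.ncard := by
  have haS : a ∉ (S i).verts :=
    (disjoint_verts_of_mem hI hi).notMem_of_mem_right (mem_verts_of_one_le_subdeg ha)
  set S' := (S i).deleteVerts {u₂}
  have hS' : IsStarAt S' c := hS.deleteVerts hu₂c
  have hc' : 5 ≤ subdeg S' c := by
    have := hS'.subdeg_center_add_one
    rw [deleteVerts_verts, Set.ncard_sdiff_singleton_of_mem hu₂] at this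
    have := hS.subdeg_center_add_one
    omega
  have hu₁' : u₁ ∈ S'.verts := ⟨hu₁, hu₁₂⟩
  have haS' : a ∉ S'.verts := fun h => haS h.1
  set P := G.subgraphOfAdj hau₁ ⊔ S'
  have hPverts : P.verts = insert a ((S i).verts \ {u₂}) := verts_subgraphOfAdj_sup hau₁ hu₁'
  have hBverts : (P ⊔ G.subgraphOfAdj hau₂).verts = insert a (S i).verts := by
    rw [verts_sup, hPverts, subgraphOfAdj_verts]
    ext z
    by_cases hz : z = u₂ <;> simp [hz, hu₂]
  have hB : (P ⊔ G.subgraphOfAdj hau₂).coe.IsTree := by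
    refine isTree_sup (isTree_subgraphOfAdj_sup hau₁ hS'.isTree haS' hu₁')
      (isTree_subgraphOfAdj hau₂) (a := a) ?_
    rw [hPverts, subgraphOfAdj_verts]
    ext z
    by_cases hz : z = u₂ <;> simp +contextual [hz, hau₂.ne.symm]
  have hab : (P ⊔ G.subgraphOfAdj hau₂).Adj a u₁ :=
    Or.inl (Or.inl (subgraphOfAdj_adj_self hau₁))
  have hadeg : 2 ≤ subdeg (P ⊔ G.subgraphOfAdj hau₂) a :=
    two_le_subdeg_of_adj hab (Or.inr (subgraphOfAdj_adj_self hau₂)) hu₁₂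
  have hcB : 5 ≤ subdeg (P ⊔ G.subgraphOfAdj hau₂) c :=
    hc'.trans (subdeg_mono (le_sup_right.trans le_sup_left) c)
  refine hT.exists_larger_of_sup hI hdisj (Set.singleton_subset_iff.mpr hi) ha hB
    (by rw [Set.biUnion_singleton, hBverts]) hab ?_ ?_
  · rintro p q ((hpq | hpq) | hpq)
    · obtain ⟨rfl, rfl⟩ | ⟨rfl, rfl⟩ := Sym2.eq_iff.mp hpq <;> omega
    · obtain rfl | rfl := hS'.eq_or_eq_center hpq <;> omega
    · obtain ⟨rfl, rfl⟩ | ⟨rfl, rfl⟩ := Sym2.eq_iff.mp hpq <;> omega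
  · rintro v w (hvw | hvw) hva hv ⟨z, hzT, hzB, hvz⟩
    · exact hS'.five_le_subdeg_of_leaf_adj hc' hau₁ haS' hu₁' le_sup_left hvw hva hv
    · obtain rfl : v = u₂ := by
        rw [subgraphOfAdj_adj, Sym2.eq_iff] at hvw
        tauto
      refine absurd ((hnb z hvz).resolve_left hzT) fun hz => hzB ?_
      exact hBverts ▸ Set.mem_insert_of_mem a hz
theorem IsCandidate.exists_larger_of_one_lt_ncard {I : Set ι} (hT : IsCandidate S T)
    (hI : T.vertsᶜ = ⋃ i ∈ I, (S i).verts)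
    (hdisj : Pairwise fun i j => Disjoint (S i).verts (S j).verts) {c : ι → V}
    (hc : ∀ i, IsStarAt (S i) (c i)) (hc6 : ∀ i, 6 ≤ subdeg (S i) (c i))
    (ha : 1 ≤ subdeg T a) (hmany : 1 < (G.neighborSet a \ T.verts).ncard) :
    ∃ T', IsCandidate S T' ∧ T.edgeSet.ncard < T'.edgeSet.ncard := by
  have hc5 : ∀ i, 5 ≤ subdeg (S i) (c i) := fun i => (hc6 i).trans' (by norm_num)
  obtain ⟨u₁, u₂, ⟨hau₁, hu₁T⟩, ⟨hau₂, hu₂T⟩, hu₁₂⟩ :=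
    (Set.one_lt_ncard_iff (s := G.neighborSet a \ T.verts)).mp hmany
  obtain ⟨i, hi, hu₁⟩ := exists_mem_star_of_notMem hI hu₁T
  obtain ⟨j, hj, hu₂⟩ := exists_mem_star_of_notMem hI hu₂T
  by_cases h₁ : 2 ≤ subdeg T a ∨ u₁ = c i
  · exact hT.exists_larger_of_adj_star hI hdisj hi (hc i) (hc5 i) ha hau₁ hu₁ h₁
  by_cases h₂ : u₂ = c j
  · exact hT.exists_larger_of_adj_star hI hdisj hj (hc j) (hc5 j) ha hau₂ hu₂ (Or.inr h₂)
  rcases eq_or_ne i j with rfl | hij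
  · by_cases hnb : ∀ z, G.Adj u₂ z → z ∈ T.verts ∨ z ∈ (S i).verts
    · exact hT.exists_larger_of_adj_two_leaves hI hdisj hi (hc i) (hc6 i) ha hau₁ hau₂ hu₁
        hu₂ hu₁₂ h₂ hnb
    push Not at hnb
    obtain ⟨z, hz, hzT, hzi⟩ := hnb
    obtain ⟨k, hk, hzk⟩ := exists_mem_star_of_notMem hI hzT
    exact hT.exists_larger_of_adj_star_adj_star hI hdisj hi hk (fun h => hzi (h ▸ hzk)) (hc i)
      (hc5 i) (hc k) (hc5 k) ha hau₂ hz hu₂ h₂ hzk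
  · exact hT.exists_larger_of_adj_two_stars hI hdisj hi hj hij (hc i) (hc5 i) (hc j) (hc5 j) ha
      hau₁ hau₂ hu₁ hu₂

end Candidate

theorem stmt_17_general (V : Type) [Fintype V] (G : SimpleGraph V)
    (m : ℕ) (S : Fin m → G.Subgraph)
    (hstar : ∀ i, IsStar (S i)) (hsize : ∀ i, 6 ≤ (S i).edgeSet.ncard)
    (hdisj : ∀ i j, i ≠ j → Disjoint (S i).verts (S j).verts)
    (hcov : ∀ w : V, ∃ i, w ∈ (S i).verts)
    (T : G.Subgraph) (hT : T.coe.IsTree)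
    (h1 : ∀ a b : V, T.Adj a b → ¬(subdeg T a = 2 ∧ subdeg T b = 2))
    (h2 : ∃ I : Set (Fin m), T.vertsᶜ = ⋃ i ∈ I, (S i).verts)
    (h3 : ∀ a : V, subdeg T a = 1 → (∃ u, u ∉ T.verts ∧ G.Adj a u) →
      ∀ w, T.Adj a w → 5 ≤ subdeg T w)
    (hmax : ∀ T' : G.Subgraph, T'.coe.IsTree →
      (∀ a b : V, T'.Adj a b → ¬(subdeg T' a = 2 ∧ subdeg T' b = 2)) →
      (∃ I : Set (Fin m), T'.vertsᶜ = ⋃ i ∈ I, (S i).verts) →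
      (∀ a : V, subdeg T' a = 1 → (∃ u, u ∉ T'.verts ∧ G.Adj a u) →
        ∀ w, T'.Adj a w → 5 ≤ subdeg T' w) →
      T'.edgeSet.ncard ≤ T.edgeSet.ncard)
    :
    ∀ a ∈ T.verts, (G.neighborSet a \ T.verts).ncard ≤ 1 := by
  obtain ⟨I, hI⟩ := h2
  have hpair : Pairwise fun i j => Disjoint (S i).verts (S j).verts := hdisj
  choose c hc using fun i => (hstar i).exists_isStarAt ((hsize i).trans' (by norm_num))
  have hc6 : ∀ i, 6 ≤ subdeg (S i) (c i) := fun i => (hc i).edgeSet_ncard ▸ hsize i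
  intro a ha
  have hTa : 1 ≤ subdeg T a := by
    obtain ⟨k, hak⟩ := hcov a
    obtain ⟨b, hab⟩ := (hc k).exists_adj hak ((hc6 k).trans' (by norm_num))
    exact one_le_subdeg_of_mem_star ((isTree_coe_iff T).mp hT).1 hI hpair ha hak
      ((S k).edge_vert hab.symm) ((S k).adj_sub hab).ne
  by_contra! hmany
  have hcand : IsCandidate S T := ⟨hT, h1, ⟨I, hI⟩, h3⟩
  obtain ⟨T', hT', hlt⟩ := hcand.exists_larger_of_one_lt_ncard hI hpair hc hc6 hTa hmany
  exact (hmax T' hT'.1 hT'.2 hT'.3 hT'.4).not_gt hlt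

/-- Claim 2 of Lemma 5: with `G` connected, triangle-free, of minimum degree at least 3,
`S` a star-cover with stars of size at least 6, and `T` a tree in `G` of maximal size
subject to conditions (1)–(3), every vertex of `T` has at most one neighbour in `G` lying
outside `V(T)`. -/
theorem stmt_17 (V : Type) [Fintype V] (G : SimpleGraph V)
    (hconn : G.Connected) (htf : G.CliqueFree 3) (hdeg : ∀ v, 3 ≤ gdeg G v)
    (m : ℕ) (S : Fin m → G.Subgraph)
    (hstar : ∀ i, IsStar (S i)) (hsize : ∀ i, 6 ≤ (S i).edgeSet.ncard)
    (hdisj : ∀ i j, i ≠ j → Disjoint (S i).verts (S j).verts)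
    (hcov : ∀ w : V, ∃ i, w ∈ (S i).verts)
    (T : G.Subgraph) (hT : T.coe.IsTree)
    (h1 : ∀ a b : V, T.Adj a b → ¬(subdeg T a = 2 ∧ subdeg T b = 2))
    (h2 : ∃ I : Set (Fin m), T.vertsᶜ = ⋃ i ∈ I, (S i).verts)
    (h3 : ∀ a : V, subdeg T a = 1 → (∃ u, u ∉ T.verts ∧ G.Adj a u) →
      ∀ w, T.Adj a w → 5 ≤ subdeg T w)
    (hmax : ∀ T' : G.Subgraph, T'.coe.IsTree →
      (∀ a b : V, T'.Adj a b → ¬(subdeg T' a = 2 ∧ subdeg T' b = 2)) →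
      (∃ I : Set (Fin m), T'.vertsᶜ = ⋃ i ∈ I, (S i).verts) →
      (∀ a : V, subdeg T' a = 1 → (∃ u, u ∉ T'.verts ∧ G.Adj a u) →
        ∀ w, T'.Adj a w → 5 ≤ subdeg T' w) →
      T'.edgeSet.ncard ≤ T.edgeSet.ncard)
    :
    ∀ a ∈ T.verts, (G.neighborSet a \ T.verts).ncard ≤ 1 :=
  stmt_17_general V G m S hstar hsize hdisj hcov T hT h1 h2 h3 hmax
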